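/- arXiv:2402.13902 — 3 statements merged into one kernel-verified Lean document; each statement's English description precedes it below -/
import Mathlib

section
/- For positive integers k_1, ..., k_d with k_1 ≥ 2 and k_d ≥ 2, and z ∈ ℂ \ ℤ, the multiple series Σ_{m_1 < m_2 < ... < m_d, m_i ∈ ℤ} 1/((z+m_1)^{k_1} ⋯ (z+m_d)^{k_d}) converges absolutely. -/
/-!
Put `u i = 1 + |m i|`. For `m` monotone, `|m i|` is largest at one of the two ends, so with
`M = max (u 0) (u d)` every `u i ≤ M`, and the exponents `k 0, k d ≥ 2` give
`∏ u i ^ k i ≥ (∏ u i) * M ≥ ∏ u i ^ (1 + 1/(d+1))`. Since `z ∉ ℤ`, `‖z + m‖ ≥ δ (1 + |m|)`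
for some `δ > 0`, so the series is dominated by `∏ i, ∑ m, (1 + |m|) ^ -(1 + 1/(d+1))`,
a product of convergent one-dimensional series.
-/

open Finset Filter

lemma prod_rpow_one_add_inv_card_le_prod_mul {ι : Type*} [Fintype ι] [Nonempty ι]
    {u : ι → ℝ} {M : ℝ} (hu : ∀ i, 0 ≤ u i) (huM : ∀ i, u i ≤ M) :
    ∏ i, u i ^ (1 + 1 / (Fintype.card ι : ℝ)) ≤ (∏ i, u i) * M := by
  have hM : 0 ≤ M := (hu (Classical.arbitrary ι)).trans (huM _)
  have hcard : (Fintype.card ι : ℝ) ≠ 0 := by positivity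
  calc ∏ i, u i ^ (1 + 1 / (Fintype.card ι : ℝ))
      ≤ ∏ i, u i * M ^ (1 / (Fintype.card ι : ℝ)) := by
        gcongr with i
        · exact fun i _ => Real.rpow_nonneg (hu i) _
        · rw [Real.rpow_add' (hu i) (by positivity), Real.rpow_one]
          exact mul_le_mul_of_nonneg_left
            (Real.rpow_le_rpow (hu i) (huM i) (by positivity)) (hu i)
    _ = (∏ i, u i) * M := by
        rw [prod_mul_distrib, prod_const, card_univ, ← Real.rpow_mul_natCast hM,
          one_div_mul_cancel hcard, Real.rpow_one]

lemma prod_mul_le_prod_pow {ι : Type*} [Fintype ι] [DecidableEq ι] {u : ι → ℝ} {k : ι → ℕ}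
    (hu : ∀ i, 1 ≤ u i) (hk : ∀ i, 1 ≤ k i) {j : ι} (hj : 2 ≤ k j) :
    (∏ i, u i) * u j ≤ ∏ i, u i ^ k i := by
  have hu0 : ∀ i, 0 ≤ u i := fun i => zero_le_one.trans (hu i)
  rw [← mul_prod_erase univ _ (mem_univ j), ← mul_prod_erase univ _ (mem_univ j), mul_right_comm,
    ← sq]
  exact mul_le_mul (pow_le_pow_right₀ (hu j) hj)
    (prod_le_prod (fun i _ => hu0 i) fun i _ => le_self_pow₀ (hu i) (by have := hk i; omega))
    (prod_nonneg fun i _ => hu0 i) (pow_nonneg (hu0 j) _)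

lemma prod_rpow_le_prod_pow_of_le_max_ends {n : ℕ} {u : Fin (n + 1) → ℝ} {k : Fin (n + 1) → ℕ}
    (hu : ∀ i, 1 ≤ u i) (hmax : ∀ i, u i ≤ max (u 0) (u (Fin.last n)))
    (hk : ∀ i, 1 ≤ k i) (hfirst : 2 ≤ k 0) (hlast : 2 ≤ k (Fin.last n)) :
    ∏ i, u i ^ (1 + 1 / ((n : ℝ) + 1)) ≤ ∏ i, u i ^ k i := by
  have key := prod_rpow_one_add_inv_card_le_prod_mul (fun i => zero_le_one.trans (hu i)) hmax
  rw [Fintype.card_fin, Nat.cast_succ] at key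
  refine key.trans ?_
  rcases max_choice (u 0) (u (Fin.last n)) with h | h <;> rw [h]
  exacts [prod_mul_le_prod_pow hu hk hfirst, prod_mul_le_prod_pow hu hk hlast]

lemma summable_inv_one_add_abs_intCast_rpow {q : ℝ} (hq : 1 < q) :
    Summable fun m : ℤ => ((1 + |(m : ℝ)|) ^ q)⁻¹ := by
  refine (Real.summable_abs_int_rpow hq).of_norm_bounded_eventually ?_
  filter_upwards [eventually_cofinite_ne 0] with m hm
  rw [Real.norm_of_nonneg (by positivity), ← Real.rpow_neg (by positivity)]
  exact Real.rpow_le_rpow_of_nonpos (by positivity) (by linarith) (by linarith)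

lemma summable_prod_apply_of_nonneg {α : Type*} {f : α → ℝ} (hf0 : ∀ a, 0 ≤ f a)
    (hf : Summable f) (n : ℕ) : Summable fun m : Fin n → α => ∏ i, f (m i) := by
  induction n with
  | zero => exact .of_finite
  | succ n ih =>
    rw [← (Fin.consEquiv fun _ => α).summable_iff]
    refine (hf.mul_of_nonneg ih hf0 fun m => prod_nonneg fun i _ => hf0 _).congr fun p => ?_
    simp [Fin.consEquiv, Fin.prod_univ_succ]

lemma abs_intCast_le_norm_add_intCast_add_norm (z : ℂ) (m : ℤ) : |(m : ℝ)| ≤ ‖z + m‖ + ‖z‖ := by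
  rw [← Complex.norm_intCast, add_comm z]
  linarith [norm_sub_le_norm_add (m : ℂ) z]

lemma exists_pos_le_norm_add_intCast {z : ℂ} (hz : ∀ m : ℤ, z ≠ m) :
    ∃ δ > 0, ∀ m : ℤ, δ ≤ ‖z + m‖ := by
  have htendsto : Tendsto (fun m : ℤ => ‖z + m‖) cofinite atTop := by
    refine tendsto_atTop_mono (fun m => ?_)
      (tendsto_atTop_add_const_right _ (-‖z‖) (tendsto_norm_cocompact_atTop.comp
        Int.tendsto_coe_cofinite))
    simp only [Function.comp_apply, Real.norm_eq_abs]
    linarith [abs_intCast_le_norm_add_intCast_add_norm z m]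
  obtain ⟨m₀, hm₀⟩ := htendsto.exists_forall_le
  refine ⟨‖z + m₀‖, norm_pos_iff.2 fun h => hz (-m₀) ?_, hm₀⟩
  push_cast
  linear_combination h

lemma exists_pos_mul_one_add_abs_le_norm_add_intCast {z : ℂ} (hz : ∀ m : ℤ, z ≠ m) :
    ∃ δ > 0, ∀ m : ℤ, δ * (1 + |(m : ℝ)|) ≤ ‖z + m‖ := by
  obtain ⟨δ₀, hδ₀, hle⟩ := exists_pos_le_norm_add_intCast hz
  -- `δ₀ (1 + |m|) ≤ δ₀ (1 + ‖z‖ + ‖z + m‖) ≤ (δ₀ + ‖z‖ + 1) ‖z + m‖`, using `δ₀ ≤ ‖z + m‖`.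
  refine ⟨δ₀ / (δ₀ + ‖z‖ + 1), by positivity, fun m => ?_⟩
  rw [div_mul_eq_mul_div, div_le_iff₀ (by positivity)]
  nlinarith [abs_intCast_le_norm_add_intCast_add_norm z m, hle m, norm_nonneg z]

lemma norm_prod_inv_pow_add_intCast_le {ι : Type*} [Fintype ι] {z : ℂ} {δ : ℝ} (hδ : 0 < δ)
    (hle : ∀ m : ℤ, δ * (1 + |(m : ℝ)|) ≤ ‖z + m‖) (k : ι → ℕ) (m : ι → ℤ) :
    ‖∏ i, ((z + m i) ^ k i)⁻¹‖ ≤ (∏ i, (δ ^ k i)⁻¹) * (∏ i, (1 + |(m i : ℝ)|) ^ k i)⁻¹ := by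
  simp only [norm_prod, norm_inv, norm_pow, ← prod_inv_distrib, ← prod_mul_distrib, ← mul_inv,
    ← mul_pow]
  exact prod_le_prod (fun i _ => by positivity) fun i _ =>
    inv_anti₀ (by positivity) (pow_le_pow_left₀ (by positivity) (hle (m i)) _)

theorem multitangent_summable (d : ℕ) (k : Fin (d + 1) → ℕ)
    (hpos : ∀ i, 1 ≤ k i) (hfirst : 2 ≤ k 0) (hlast : 2 ≤ k (Fin.last d))
    (z : ℂ) (hz : ∀ m : ℤ, z ≠ m) :
    Summable (fun m : {m : Fin (d + 1) → ℤ // StrictMono m} =>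
      ‖∏ i, ((z + (m.1 i : ℂ)) ^ k i)⁻¹‖) := by
  obtain ⟨δ, hδ, hle⟩ := exists_pos_mul_one_add_abs_le_norm_add_intCast hz
  set q : ℝ := 1 + 1 / ((d : ℝ) + 1)
  set C : ℝ := ∏ i, (δ ^ k i)⁻¹
  have hsum : Summable fun m : Fin (d + 1) → ℤ => C * (∏ i, (1 + |(m i : ℝ)|) ^ q)⁻¹ := by
    simp only [← prod_inv_distrib]
    exact (summable_prod_apply_of_nonneg (fun _ => by positivity)
      (summable_inv_one_add_abs_intCast_rpow (lt_add_of_pos_right 1 (by positivity))) _).mul_left C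
  refine (hsum.comp_injective Subtype.val_injective).of_nonneg_of_le (fun _ => norm_nonneg _)
    fun ⟨m, hm⟩ => (norm_prod_inv_pow_add_intCast_le hδ hle k m).trans ?_
  have hends (i : Fin (d + 1)) : |(m i : ℝ)| ≤ max |(m 0 : ℝ)| |(m (Fin.last d) : ℝ)| :=
    abs_le_max_abs_abs (by exact_mod_cast hm.monotone (Fin.zero_le i))
      (by exact_mod_cast hm.monotone (Fin.le_last i))
  have hred := prod_rpow_le_prod_pow_of_le_max_ends (u := fun i => 1 + |(m i : ℝ)|)
    (fun i => by simp) (fun i => by simpa [max_add_add_left] using hends i) hpos hfirst hlast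
  exact mul_le_mul_of_nonneg_left (inv_anti₀ (by positivity) hred) (by positivity)
end

section
/- For positive integers k_1, ..., k_r with k_1, k_r ≥ 2, the multitangent function Ψ_{k_1,...,k_r} is holomorphic on ℂ \ ℤ. -/
/-!
On a compact set `K` avoiding `ℤ` one has `‖z + n‖ ≥ c (1 + |n|)` uniformly, so it suffices to
bound the summands with `z` removed. For a strictly increasing tuple `m`, every weight
`1 + |m_i|` is at most the larger of the two end weights, and that end carries an exponent
`≥ 2`; spreading one of its factors over all `r + 1` indices bounds `∏ (1 + |m_i|)^(-k_i)` by
`∏ (1 + |m_i|)^(-(1 + 1/(r+1)))`, which is summable even over all of `ℤ^(r+1)`. The Weierstrass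
M-test then gives holomorphy.
-/

/-- The multitangent function `Ψ_{k_1,...,k_d}(z)`. -/
noncomputable def Multitangent {d : ℕ} (k : Fin d → ℕ) (z : ℂ) : ℂ :=
  ∑' m : {m : Fin d → ℤ // StrictMono m}, ∏ i, ((z + (m.1 i : ℂ)) ^ k i)⁻¹

open Finset

lemma summable_one_add_abs_rpow_neg {s : ℝ} (hs : 1 < s) :
    Summable fun n : ℤ => (1 + |(n : ℝ)|) ^ (-s) := by
  refine (Real.summable_abs_int_rpow hs).of_norm_bounded_eventually ?_
  filter_upwards [(Set.finite_singleton (0 : ℤ)).compl_mem_cofinite] with n hn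
  have hn : (0 : ℝ) < |(n : ℝ)| := by simpa using hn
  rw [Real.norm_of_nonneg (by positivity)]
  exact Real.rpow_le_rpow_of_nonpos hn (by linarith) (by linarith)

lemma summable_pi_prod_of_nonneg {ι κ : Type*} [Fintype ι] {f : κ → ℝ} (hf0 : 0 ≤ f)
    (hf : Summable f) : Summable fun x : ι → κ => ∏ i, f (x i) := by
  classical
  refine summable_of_sum_le (c := ∏ _i : ι, ∑' n, f n)
    (fun x => prod_nonneg fun i _ => hf0 _) fun u => ?_
  calc ∑ x ∈ u, ∏ i, f (x i)
      ≤ ∑ x ∈ Fintype.piFinset fun i => u.image (· i), ∏ i, f (x i) :=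
        sum_le_sum_of_subset_of_nonneg (fun x hx => Fintype.mem_piFinset.2 fun i =>
          mem_image_of_mem _ hx) fun x _ _ => prod_nonneg fun i _ => hf0 _
    _ = ∏ i, ∑ n ∈ u.image (· i), f n := (prod_univ_sum _ fun _ => f).symm
    _ ≤ ∏ _i : ι, ∑' n, f n :=
        prod_le_prod (fun i _ => sum_nonneg fun n _ => hf0 n) fun i _ =>
          hf.sum_le_tsum _ fun n _ => hf0 n

lemma prod_inv_pow_le_prod_rpow_neg {ι : Type*} [Fintype ι] {x : ι → ℝ} {k : ι → ℕ} {j : ι}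
    (hx : ∀ i, 1 ≤ x i) (hxj : ∀ i, x i ≤ x j) (hk : ∀ i, 1 ≤ k i) (hkj : 2 ≤ k j) :
    ∏ i, (x i ^ k i)⁻¹ ≤ ∏ i, x i ^ (-(1 + 1 / Fintype.card ι : ℝ)) := by
  classical
  have hx0 : ∀ i, 0 < x i := fun i => zero_lt_one.trans_le (hx i)
  have hpow : ∀ i, ∀ {n l : ℕ}, l ≤ n → (x i ^ n)⁻¹ ≤ (x i ^ l)⁻¹ := fun i _ _ hn =>
    inv_anti₀ (pow_pos (hx0 i) _) (pow_le_pow_right₀ (hx i) hn)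
  have hextra : ∏ i, (x i ^ k i)⁻¹ ≤ (x j)⁻¹ * ∏ i, (x i)⁻¹ := by
    rw [← mul_prod_erase _ _ (mem_univ j), ← mul_prod_erase _ (fun i => (x i)⁻¹) (mem_univ j),
      ← mul_assoc, ← mul_inv, ← sq]
    refine mul_le_mul (hpow j hkj) (prod_le_prod (fun i _ => (inv_pos.2 (pow_pos (hx0 i) _)).le)
      fun i _ => ?_) (prod_nonneg fun i _ => (inv_pos.2 (pow_pos (hx0 i) _)).le)
      (inv_pos.2 (pow_pos (hx0 j) _)).le
    simpa using hpow i (hk i)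
  have : Nonempty ι := ⟨j⟩
  have hcard : (Fintype.card ι : ℝ) ≠ 0 := Nat.cast_ne_zero.2 Fintype.card_ne_zero
  have hspread : (x j)⁻¹ ≤ ∏ i, x i ^ (-(1 / Fintype.card ι : ℝ)) :=
    calc (x j)⁻¹ = ∏ _i : ι, x j ^ (-(1 / Fintype.card ι : ℝ)) := by
          rw [prod_const, card_univ, ← Real.rpow_mul_natCast (hx0 j).le, neg_mul, one_div,
            inv_mul_cancel₀ hcard, Real.rpow_neg_one]
      _ ≤ ∏ i, x i ^ (-(1 / Fintype.card ι : ℝ)) :=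
          prod_le_prod (fun i _ => (Real.rpow_pos_of_pos (hx0 j) _).le) fun i _ =>
            Real.rpow_le_rpow_of_nonpos (hx0 i) (hxj i) (by simp)
  calc ∏ i, (x i ^ k i)⁻¹ ≤ (∏ i, x i ^ (-(1 / Fintype.card ι : ℝ))) * ∏ i, (x i)⁻¹ :=
        hextra.trans (mul_le_mul_of_nonneg_right hspread
          (prod_nonneg fun i _ => (inv_pos.2 (hx0 i)).le))
    _ = ∏ i, x i ^ (-(1 + 1 / Fintype.card ι : ℝ)) := by
        rw [← prod_mul_distrib]
        refine prod_congr rfl fun i _ => ?_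
        rw [neg_add, Real.rpow_add (hx0 i), Real.rpow_neg_one, mul_comm]

lemma prod_inv_one_add_abs_pow_le {r : ℕ} {m : Fin (r + 1) → ℤ} (hm : Monotone m)
    {k : Fin (r + 1) → ℕ} (hk : ∀ i, 1 ≤ k i) (hfirst : 2 ≤ k 0) (hlast : 2 ≤ k (Fin.last r)) :
    ∏ i, ((1 + |(m i : ℝ)|) ^ k i)⁻¹ ≤ ∏ i, (1 + |(m i : ℝ)|) ^ (-(1 + 1 / (r + 1)) : ℝ) := by
  have hone : ∀ i, 1 ≤ 1 + |(m i : ℝ)| := fun i => le_add_of_nonneg_right (abs_nonneg _)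
  have hends : ∀ i, |(m i : ℝ)| ≤ max |(m 0 : ℝ)| |(m (Fin.last r) : ℝ)| := fun i =>
    abs_le_max_abs_abs (Int.cast_le.2 (hm (Fin.zero_le i))) (Int.cast_le.2 (hm (Fin.le_last i)))
  have key := fun j hkj (hj : ∀ i, |(m i : ℝ)| ≤ |(m j : ℝ)|) =>
    prod_inv_pow_le_prod_rpow_neg (j := j) hone (fun i => (add_le_add_iff_left 1).2 (hj i)) hk hkj
  simp only [Fintype.card_fin, Nat.cast_add, Nat.cast_one] at key
  rcases le_total |(m 0 : ℝ)| |(m (Fin.last r) : ℝ)| with h | h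
  · exact key _ hlast fun i => (hends i).trans (max_eq_right h).le
  · exact key _ hfirst fun i => (hends i).trans (max_eq_left h).le

lemma IsCompact.exists_pos_mul_le_norm_add_intCast {K : Set ℂ} (hK : IsCompact K)
    (hKZ : ∀ z ∈ K, ∀ n : ℤ, z ≠ n) :
    ∃ c > 0, ∀ z ∈ K, ∀ n : ℤ, c * (1 + |(n : ℝ)|) ≤ ‖z + n‖ := by
  obtain ⟨δ, hδ, hδK⟩ := Metric.exists_pos_forall_lt_edist hK Complex.isClosed_range_intCast
    (Set.disjoint_left.2 fun z hz ⟨n, hn⟩ => hKZ z hz n hn.symm)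
  obtain ⟨R, hR, hRK⟩ := hK.isBounded.exists_pos_norm_le
  have hδ' : (0 : ℝ) < δ := hδ
  refine ⟨δ / (δ + 1 + R), by positivity, fun z hz n => ?_⟩
  have hdist : (δ : ℝ) ≤ ‖z + n‖ := by
    have h := hδK z hz _ ⟨-n, rfl⟩
    rw [edist_dist, ← ENNReal.ofReal_coe_nnreal] at h
    simpa [dist_eq_norm] using ((ENNReal.ofReal_lt_ofReal_iff_of_nonneg δ.2).1 h).le
  have habs : 1 + |(n : ℝ)| ≤ ‖z + n‖ + (1 + R) := by
    have h := norm_sub_le (z + n) z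
    rw [add_sub_cancel_left, Complex.norm_intCast] at h
    linarith [hRK z hz]
  rw [div_mul_eq_mul_div, div_le_iff₀ (by positivity)]
  nlinarith

lemma norm_prod_inv_pow_le {ι 𝕜 : Type*} [Fintype ι] [NormedField 𝕜] {y : ι → 𝕜} {x : ι → ℝ}
    {c : ℝ} (hc : 0 < c) (hx : ∀ i, 0 < x i) (hxy : ∀ i, c * x i ≤ ‖y i‖) (k : ι → ℕ) :
    ‖∏ i, (y i ^ k i)⁻¹‖ ≤ (c ^ ∑ i, k i)⁻¹ * ∏ i, (x i ^ k i)⁻¹ := by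
  rw [norm_prod, ← prod_pow_eq_pow_sum, ← prod_inv_distrib, ← prod_mul_distrib]
  refine prod_le_prod (fun i _ => norm_nonneg _) fun i _ => ?_
  rw [norm_inv, norm_pow, ← mul_inv, ← mul_pow]
  exact inv_anti₀ (pow_pos (mul_pos hc (hx i)) _) (pow_le_pow_left₀ (by positivity [hx i]) (hxy i) _)

theorem multitangent_differentiableOn (r : ℕ) (k : Fin (r + 1) → ℕ)
    (hpos : ∀ i, 1 ≤ k i) (hfirst : 2 ≤ k 0) (hlast : 2 ≤ k (Fin.last r)) :
    DifferentiableOn ℂ (fun z => Multitangent k z) {z : ℂ | ∀ m : ℤ, z ≠ m} := by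
  have hopen : IsOpen {z : ℂ | ∀ m : ℤ, z ≠ m} := by
    convert Complex.isOpen_compl_range_intCast using 1
    ext z
    simp [eq_comm]
  refine SummableLocallyUniformlyOn.differentiableOn hopen
    (SummableLocallyUniformlyOn_of_locally_bounded hopen fun K hK hKc => ?_) fun m z hz => ?_
  · obtain ⟨c, hc, hcK⟩ := hKc.exists_pos_mul_le_norm_add_intCast hK
    have hs : (1 : ℝ) < 1 + 1 / (r + 1) := lt_add_of_pos_right _ (by positivity)
    refine ⟨fun m => (c ^ ∑ i, k i)⁻¹ * ∏ i, (1 + |(m.1 i : ℝ)|) ^ (-(1 + 1 / (r + 1)) : ℝ),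
      ?_, fun m z hz => ?_⟩
    · exact ((summable_pi_prod_of_nonneg (fun n => by positivity)
        (summable_one_add_abs_rpow_neg hs)).subtype _).mul_left _
    · calc _ ≤ (c ^ ∑ i, k i)⁻¹ * ∏ i, ((1 + |(m.1 i : ℝ)|) ^ k i)⁻¹ :=
            norm_prod_inv_pow_le hc (fun i => by positivity) (fun i => hcK z hz _) k
        _ ≤ _ := mul_le_mul_of_nonneg_left
            (prod_inv_one_add_abs_pow_le m.2.monotone hpos hfirst hlast) (by positivity)
  · have hne : ∀ i, z + (m.1 i : ℂ) ≠ 0 := fun i h =>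
      hz (-m.1 i) (by push_cast; linear_combination h)
    fun_prop (disch := exact pow_ne_zero _ (hne _))
end

section
/- For z ∈ ℂ \ ℤ and integers a, b ≥ 2, the product Ψ_a(z)·Ψ_b(z) of monotangent functions equals Ψ_{a,b}(z) + Ψ_{b,a}(z) + Ψ_{a+b}(z). -/
/-- The monotangent function `Ψ_k(z)`. -/
noncomputable def Monotangent (k : ℕ) (z : ℂ) : ℂ := ∑' m : ℤ, ((z + (m : ℂ)) ^ k)⁻¹

/-!
Expand `Ψ_a(z) Ψ_b(z) = ∑_{(m,n) ∈ ℤ²} (z+m)^{-a} (z+n)^{-b}` as an absolutely convergent double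
series and split `ℤ²` into the three regions `m < n`, `n < m` and `m = n`. The first two give the
multitangents `Ψ_{a,b}` and `Ψ_{b,a}`, the diagonal gives `Ψ_{a+b}`.
-/

open Set

theorem tsum_mul_tsum_eq_tsum_lt_add_tsum_lt_add_tsum_diag {ι R : Type*} [LinearOrder ι]
    [NormedCommRing R] [CompleteSpace R] {f g : ι → R}
    (hf : Summable fun i => ‖f i‖) (hg : Summable fun i => ‖g i‖) :
    (∑' i, f i) * (∑' i, g i) =
      ∑' p : {p : ι × ι // p.1 < p.2}, f p.1.1 * g p.1.2 +
        ∑' p : {p : ι × ι // p.1 < p.2}, g p.1.1 * f p.1.2 + ∑' i, f i * g i := by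
  have hF := summable_mul_of_summable_norm hf hg
  set A : Set (ι × ι) := {p | p.1 < p.2}
  have hcover : A ∪ Prod.swap '' A ∪ range Function.diag = univ := by
    ext ⟨i, j⟩
    rcases lt_trichotomy i j with h | h | h <;> simp [A, h]
  have hdisj : Disjoint A (Prod.swap '' A) := by
    simp only [A, image_swap_eq_preimage_swap, disjoint_left]
    exact fun _ => lt_asymm
  have hdisj' : Disjoint (A ∪ Prod.swap '' A) (range Function.diag) := by
    simp only [A, image_swap_eq_preimage_swap, disjoint_left]
    rintro _ h ⟨i, rfl⟩
    simp at h
  rw [tsum_mul_tsum_of_summable_norm hf hg, ← tsum_univ, ← hcover,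
    hF.subtype _ |>.tsum_union_disjoint hdisj' (hF.subtype _),
    hF.subtype _ |>.tsum_union_disjoint hdisj (hF.subtype _),
    tsum_image (fun p : ι × ι => f p.1 * g p.2) Prod.swap_injective.injOn,
    tsum_range (fun p : ι × ι => f p.1 * g p.2) Function.diag_injective]
  simp only [Prod.fst_swap, Prod.snd_swap, Function.diag, mul_comm (f _)]
  rfl

theorem summable_norm_inv_add_intCast_pow (z : ℂ) {k : ℕ} (hk : 2 ≤ k) :
    Summable fun m : ℤ => ‖((z + m) ^ k)⁻¹‖ :=
  summable_norm_iff.mpr <| by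
    simpa using EisensteinSeries.linear_right_summable z 1 (k := k) (by exact_mod_cast hk)

def strictMonoFinTwoEquiv (α : Type*) [Preorder α] :
    {m : Fin 2 → α // StrictMono m} ≃ {p : α × α // p.1 < p.2} :=
  (finTwoArrowEquiv α).subtypeEquiv fun m => by
    simp [Fin.strictMono_iff_lt_succ]

theorem multitangent_pair (a b : ℕ) (z : ℂ) :
    Multitangent ![a, b] z =
      ∑' p : {p : ℤ × ℤ // p.1 < p.2}, ((z + p.1.1) ^ a)⁻¹ * ((z + p.1.2) ^ b)⁻¹ := by
  rw [Multitangent, ← (strictMonoFinTwoEquiv ℤ).symm.tsum_eq]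
  simp only [strictMonoFinTwoEquiv, Fin.prod_univ_two, Equiv.subtypeEquiv_symm,
    Equiv.subtypeEquiv_apply, finTwoArrowEquiv_symm_apply, Matrix.cons_val_zero, Matrix.cons_val_one]

theorem monotangent_add (a b : ℕ) (z : ℂ) :
    Monotangent (a + b) z = ∑' m : ℤ, ((z + m) ^ a)⁻¹ * ((z + m) ^ b)⁻¹ := by
  simp only [Monotangent, pow_add, mul_inv]

theorem monotangent_mul_general (a b : ℕ) (ha : 2 ≤ a) (hb : 2 ≤ b)
    (z : ℂ) :
    Monotangent a z * Monotangent b z =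
      Multitangent ![a, b] z + Multitangent ![b, a] z + Monotangent (a + b) z := by
  rw [Monotangent, Monotangent, multitangent_pair, multitangent_pair, monotangent_add]
  exact tsum_mul_tsum_eq_tsum_lt_add_tsum_lt_add_tsum_diag
    (summable_norm_inv_add_intCast_pow z ha) (summable_norm_inv_add_intCast_pow z hb)

theorem monotangent_mul (a b : ℕ) (ha : 2 ≤ a) (hb : 2 ≤ b)
    (z : ℂ) (hz : ∀ m : ℤ, z ≠ m) :
    Monotangent a z * Monotangent b z =
      Multitangent ![a, b] z + Multitangent ![b, a] z + Monotangent (a + b) z :=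
  monotangent_mul_general a b ha hb z
end
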